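/- arXiv:1512.08341 — 9 statements merged into one kernel-verified Lean document; each statement's English description precedes it below -/
import Mathlib

section
/- Let a, b be integers, not both zero, and define a' = b - max(0, max(b,0) - a) and b' = max(b,0) - a. Then gcd(a', b') = gcd(a, b). -/
/-!
On each branch of the maxima the update is an elementary operation on the pair:
`a' = b - b'⁺` differs from `b` by `0` or `b'`, and `b' = b⁺ - a` differs from `-a` by `0` or `b`.
So `gcd (a', b') = gcd (b, b') = gcd (b, a)`.
-/

namespace Int

theorem gcd_sub_max_zero_left (m n : ℤ) : gcd (m - max 0 n) n = gcd m n := by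
  rcases le_total n 0 with hn | hn
  · rw [max_eq_left hn, sub_zero]
  · rw [max_eq_right hn, gcd_sub_self_left]

theorem gcd_max_zero_sub_right (m n : ℤ) : gcd m (max m 0 - n) = gcd m n := by
  rcases le_total m 0 with hm | hm
  · rw [max_eq_right hm, zero_sub, gcd_neg]
  · rw [max_eq_left hm, gcd_self_sub_right]

end Int

theorem stmt_0_general (a b : ℤ) :
    Int.gcd (b - max 0 (max b 0 - a)) (max b 0 - a) = Int.gcd a b := by
  rw [Int.gcd_sub_max_zero_left, Int.gcd_max_zero_sub_right, Int.gcd_comm]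

theorem stmt_0 (a b : ℤ) (h : ¬(a = 0 ∧ b = 0)) :
    Int.gcd (b - max 0 (max b 0 - a)) (max b 0 - a) = Int.gcd a b :=
  stmt_0_general a b
end

section
/- Let a, b be integers, not both zero, and define a' = max(a + max(b,0), b) and b' = b - a - max(b,0). Then gcd(a', b') = gcd(a, b). -/
/-!
With `c = a + max b 0` the new coordinates are `a' = max c b` and `b' = b - c`. Whichever of `c`, `b`
the maximum picks, subtracting it from `b - c` leaves the other one up to sign, so `gcd(a', b') = gcd(c, b)`;
and `max b 0` is `0` or `b`, so adding it to `a` does not change `gcd(a, b)`.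
-/

theorem Int.gcd_max_sub (c b : ℤ) : Int.gcd (max c b) (b - c) = Int.gcd c b := by
  rcases max_choice c b with h | h <;> rw [h]
  · exact Int.gcd_sub_self_right c b
  · rw [Int.gcd_self_sub_right, Int.gcd_comm]

theorem Int.gcd_add_max_zero_left (a b : ℤ) : Int.gcd (a + max b 0) b = Int.gcd a b := by
  rcases max_choice b 0 with h | h <;> rw [h]
  · exact Int.gcd_add_self_left b a
  · rw [add_zero]

theorem stmt_1_general (a b : ℤ) :
    Int.gcd (max (a + max b 0) b) (b - a - max b 0) = Int.gcd a b := by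
  rw [sub_sub, Int.gcd_max_sub, Int.gcd_add_max_zero_left]

theorem stmt_1 (a b : ℤ) (h : ¬(a = 0 ∧ b = 0)) :
    Int.gcd (max (a + max b 0) b) (b - a - max b 0) = Int.gcd a b :=
  stmt_1_general a b
end

section
/- Let a, b be integers, not both zero, and define a'' = max(0, a + max(b,0)) - b and b'' = a + max(b,0). Then gcd(a'', b'') = gcd(a, b). -/
/-! Each `max` in the formula evaluates either to `0` or to the other argument of the
gcd it sits in, so it only contributes a Euclidean step `gcd (y + x) x = gcd y x`. -/

theorem Int.gcd_add_of_eq_zero_or_eq {x y m : ℤ} (hm : m = 0 ∨ m = x) :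
    Int.gcd (y + m) x = Int.gcd y x := by
  rcases hm with rfl | rfl
  · rw [add_zero]
  · exact Int.gcd_add_self_left _ _

theorem stmt_2_general (a b : ℤ) :
    Int.gcd (max 0 (a + max b 0) - b) (a + max b 0) = Int.gcd a b := by
  set c := a + max b 0
  calc Int.gcd (max 0 c - b) c
      = Int.gcd (-b) c := by
        rw [sub_eq_neg_add]
        exact Int.gcd_add_of_eq_zero_or_eq (max_choice 0 c)
    _ = Int.gcd c b := by rw [Int.neg_gcd, Int.gcd_comm]
    _ = Int.gcd a b := Int.gcd_add_of_eq_zero_or_eq (max_choice b 0).symm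

theorem stmt_2 (a b : ℤ) (h : ¬(a = 0 ∧ b = 0)) :
    Int.gcd (max 0 (a + max b 0) - b) (a + max b 0) = Int.gcd a b :=
  stmt_2_general a b
end

section
/- Let a, b be integers, not both zero, and define a'' = min(a - max(b,0), -b) and b'' = a + b - max(b,0). Then gcd(a'', b'') = gcd(a, b). -/
theorem Int.dvd_max_self_zero (b : ℤ) : b ∣ max b 0 := by
  rcases max_choice b 0 with h | h <;> simp [h]

theorem stmt_3_general (a b : ℤ) :
    Int.gcd (min (a - max b 0) (-b)) (a + b - max b 0) = Int.gcd a b := by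
  -- `max b 0` is a multiple of `b` and `b'' = (a - max b 0) + b`, so both candidates for the
  -- minimum have the same gcd with `b''` as `a` has with `b`.
  have hb := Int.dvd_max_self_zero b
  refine min_rec' (fun x => Int.gcd x (a + b - max b 0) = Int.gcd a b) ?_ ?_
  · rw [show a + b - max b 0 = a - max b 0 + b by ring, Int.gcd_self_add_right,
      Int.gcd_sub_right_left_of_dvd a hb]
  · rw [Int.neg_gcd, Int.gcd_sub_right_right_of_dvd _ hb, Int.gcd_add_self_right, Int.gcd_comm]

theorem stmt_3 (a b : ℤ) (h : ¬(a = 0 ∧ b = 0)) :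
    Int.gcd (min (a - max b 0) (-b)) (a + b - max b 0) = Int.gcd a b :=
  stmt_3_general a b
end

section
/- The map on ℤ² \ {0} sending (a,b) to (b - max(0, max(b,0) - a), max(b,0) - a) is a bijection from ℤ² \ {0} to itself, with inverse (a,b) ↦ (max(0, a + max(b,0)) - b, a + max(b,0)). -/
/-!
Write `x⁺ = max x 0`. For `(a, b)`, put `c = b⁺ - a`; then `σ₁ (a, b) = (b - c⁺, c)`, and
the inverse formula recovers `b` as `(b - c⁺) + c⁺` and then `a` as `b⁺ - c`. Symmetrically, for
`c = a + b⁺` the inverse sends `(a, b)` to `(c⁺ - b, c)`, and `σ₁` recovers `b` as `c⁺ - (c⁺ - b)`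
and then `a` as `c - b⁺`. So the two maps are inverse on all of `ℤ²` without any case analysis,
and both fix `0`, hence preserve `ℤ² \ {0}`.
-/

def sigmaOne (p : ℤ × ℤ) : ℤ × ℤ :=
  (p.2 - max 0 (max p.2 0 - p.1), max p.2 0 - p.1)

def sigmaOneInv (p : ℤ × ℤ) : ℤ × ℤ :=
  (max 0 (p.1 + max p.2 0) - p.2, p.1 + max p.2 0)

theorem sigmaOneInv_sigmaOne (p : ℤ × ℤ) : sigmaOneInv (sigmaOne p) = p := by
  obtain ⟨a, b⟩ := p
  simp only [sigmaOne, sigmaOneInv]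
  rw [max_comm 0 (max b 0 - a), sub_add_cancel, max_comm 0 b, sub_sub_cancel]

theorem sigmaOne_sigmaOneInv (p : ℤ × ℤ) : sigmaOne (sigmaOneInv p) = p := by
  obtain ⟨a, b⟩ := p
  simp only [sigmaOne, sigmaOneInv]
  rw [max_comm 0 (a + max b 0), sub_sub_cancel, max_comm 0 b, add_sub_cancel_right]

def sigmaOneEquiv : ℤ × ℤ ≃ ℤ × ℤ where
  toFun := sigmaOne
  invFun := sigmaOneInv
  left_inv := sigmaOneInv_sigmaOne
  right_inv := sigmaOne_sigmaOneInv

theorem sigmaOne_zero : sigmaOne 0 = 0 := by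
  simp [sigmaOne]

theorem sigmaOneInv_zero : sigmaOneInv 0 = 0 := by
  simp [sigmaOneInv]

theorem sigmaOne_eq_zero_iff {p : ℤ × ℤ} : sigmaOne p = 0 ↔ p = 0 :=
  sigmaOneEquiv.injective.eq_iff' sigmaOne_zero

theorem sigmaOneInv_eq_zero_iff {p : ℤ × ℤ} : sigmaOneInv p = 0 ↔ p = 0 :=
  sigmaOneEquiv.symm.injective.eq_iff' sigmaOneInv_zero

theorem stmt_4
    (f g : ℤ × ℤ → ℤ × ℤ)
    (hf : ∀ p : ℤ × ℤ, f p = (p.2 - max 0 (max p.2 0 - p.1), max p.2 0 - p.1))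
    (hg : ∀ p : ℤ × ℤ, g p = (max 0 (p.1 + max p.2 0) - p.2, p.1 + max p.2 0)) :
    (∀ p : ℤ × ℤ, p ≠ 0 → f p ≠ 0) ∧
    (∀ p : ℤ × ℤ, p ≠ 0 → g p ≠ 0) ∧
    (∀ p : ℤ × ℤ, p ≠ 0 → g (f p) = p) ∧
    (∀ p : ℤ × ℤ, p ≠ 0 → f (g p) = p) := by
  obtain rfl : f = sigmaOne := funext hf
  obtain rfl : g = sigmaOneInv := funext hg
  exact ⟨fun _ hp => mt sigmaOne_eq_zero_iff.mp hp, fun _ hp => mt sigmaOneInv_eq_zero_iff.mp hp,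
    fun p _ => sigmaOneInv_sigmaOne p, fun p _ => sigmaOne_sigmaOneInv p⟩
end

section
/- Let n ≥ 3 and (a; b) ∈ ℤ^{2n-4}, and define α_j via equations (2) and (3) of the paper. Then α_j ≥ 0 for all 1 ≤ j ≤ 2n-4. -/
/-!
Write `S i = ∑_{j < i} b j` and `M` for the maximum in (2), so that `β i / 2 = M - S i`.
For `k = ⌈j/2⌉`, equation (3) makes `α j` equal to `±a k + M - S k` or `±a k + M - S (k + 1)`,
and both are nonnegative because `M ≥ |a k| + (b k)⁺ + S k`, while `(b k)⁺` dominates both `0`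
and `b k = S (k + 1) - S k`.
-/

open Finset

lemma sum_Icc_eq_sum_Icc_sub_one_add {M : Type*} [AddCommMonoid M] (f : ℕ → M) {a b : ℕ}
    (hab : a ≤ b) (hb : 0 < b) : ∑ i ∈ Icc a b, f i = ∑ i ∈ Icc a (b - 1), f i + f b := by
  rw [← insert_Icc_sub_one_right_eq_Icc hab, sum_insert (by simp; omega), add_comm]

lemma zero_le_neg_one_pow_mul_add_ediv_two {x s M : ℤ} (j : ℕ) (h : |x| + s ≤ M) :
    0 ≤ (-1) ^ j * x + (2 * M - 2 * s) / 2 := by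
  have : -|x| ≤ (-1) ^ j * x := by simpa [abs_mul] using neg_abs_le ((-1) ^ j * x)
  omega

theorem stmt_11 (n : ℕ) (hn : 3 ≤ n) (a b β α : ℕ → ℤ)
    (hβ : ∀ i, β i =
      2 * (Finset.Icc 1 (n - 2)).sup' (Finset.nonempty_Icc.mpr (by omega))
            (fun k => |a k| + max (b k) 0 + ∑ j ∈ Finset.Icc 1 (k - 1), b j)
        - 2 * ∑ j ∈ Finset.Icc 1 (i - 1), b j)
    (hα : ∀ j ∈ Finset.Icc 1 (2 * n - 4),
      (0 ≤ b ((j + 1) / 2) →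
        α j = (-1) ^ j * a ((j + 1) / 2) + β ((j + 1) / 2) / 2) ∧
      (b ((j + 1) / 2) ≤ 0 →
        α j = (-1) ^ j * a ((j + 1) / 2) + β (1 + (j + 1) / 2) / 2)) :
    ∀ j ∈ Finset.Icc 1 (2 * n - 4), 0 ≤ α j := by
  intro j hj
  obtain ⟨hα_nonneg, hα_nonpos⟩ := hα j hj
  set k := (j + 1) / 2
  have hk : k ∈ Icc 1 (n - 2) := by simp only [mem_Icc] at hj ⊢; omega
  have hM := le_sup' (fun k => |a k| + max (b k) 0 + ∑ j ∈ Icc 1 (k - 1), b j) hk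
  rcases le_total 0 (b k) with hb | hb
  · rw [hα_nonneg hb, hβ]
    exact zero_le_neg_one_pow_mul_add_ediv_two j (by linarith [le_max_right (b k) 0])
  · have hS : ∑ i ∈ Icc 1 (1 + k - 1), b i = ∑ i ∈ Icc 1 (k - 1), b i + b k := by
      have hk1 : 1 ≤ k := (mem_Icc.mp hk).1
      rw [Nat.add_sub_cancel_left, sum_Icc_eq_sum_Icc_sub_one_add b hk1 hk1]
    rw [hα_nonpos hb, hβ, hS]
    exact zero_le_neg_one_pow_mul_add_ediv_two j (by linarith [le_max_left (b k) 0])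
end

section
/- Define the extended coordinates of (a₁,…,a_{n-2}; b₁,…,b_{n-2}) ∈ ℤ^{2n-4} by a₀ = a_{n-1} = 0, b₀ = -max_{1≤k≤n-2}(|a_k| + b_k⁺ + Σ_{j=1}^{k-1} b_j), and b_{n-1} = -b₀ - Σ_{j=1}^{n-2} b_j. Then Σ_{i=0}^{n-1}(|a_i| + |b_i|) ≤ 4·Σ_{i=1}^{n-2}(|a_i| + |b_i|). -/
/-!
Let `M = ∑_{i=1}^{n-2} (|a_i| + |b_i|)`. The `k`-th candidate in the maximum defining
`b₀` is at most the partial sum `∑_{j ≤ k} (|a_j| + |b_j|) ≤ M`, and the candidate `k = 1` is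
nonnegative, so `|b₀| ≤ M`. Then `|b_{n-1}| ≤ |b₀| + |∑ b_j| ≤ 2M`, and the full sum is
`M + |b₀| + |b_{n-1}| ≤ 4M`.
-/

open Finset

theorem Finset.sum_range_eq_add_sum_Icc_add {M : Type*} [AddCommMonoid M] (f : ℕ → M) {n : ℕ}
    (hn : 2 ≤ n) : ∑ i ∈ range n, f i = f 0 + ∑ i ∈ Icc 1 (n - 2), f i + f (n - 1) := by
  obtain ⟨m, rfl⟩ := Nat.exists_eq_add_of_le' hn
  rw [Nat.add_sub_cancel, Nat.add_sub_assoc (by norm_num), sum_range_succ,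
    Nat.range_succ_eq_Icc_zero, ← add_sum_Ioc_eq_sum_Icc (Nat.zero_le m),
    ← Icc_succ_left_eq_Ioc, Order.succ_eq_add_one, zero_add]

theorem Finset.abs_sum_le_sum_abs_add_abs {ι G : Type*} [AddCommGroup G] [LinearOrder G]
    [IsOrderedAddMonoid G] (s : Finset ι) (f g : ι → G) :
    |∑ i ∈ s, g i| ≤ ∑ i ∈ s, (|f i| + |g i|) :=
  (abs_sum_le_sum_abs g s).trans (sum_le_sum fun _ _ => le_add_of_nonneg_left (abs_nonneg _))

theorem Finset.abs_sup'_le {α β : Type*} [AddCommGroup α] [LinearOrder α] [IsOrderedAddMonoid α]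
    {s : Finset β} (hs : s.Nonempty) {f : β → α} {M : α} {i : β} (hi : i ∈ s) (hfi : 0 ≤ f i)
    (hf : ∀ j ∈ s, f j ≤ M) : |s.sup' hs f| ≤ M := by
  rw [abs_of_nonneg (hfi.trans (le_sup' f hi))]
  exact sup'_le hs f hf

theorem abs_add_max_zero_add_sum_Icc_le (a b : ℕ → ℤ) {k : ℕ} (hk : 1 ≤ k) :
    |a k| + max (b k) 0 + ∑ j ∈ Icc 1 (k - 1), b j ≤ ∑ j ∈ Icc 1 k, (|a j| + |b j|) := by
  obtain ⟨m, rfl⟩ := Nat.exists_eq_add_of_le' hk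
  rw [Nat.add_sub_cancel, sum_Icc_succ_top (by omega)]
  have hsum := (le_abs_self _).trans (abs_sum_le_sum_abs_add_abs (Icc 1 m) a b)
  have hmax : max (b (m + 1)) 0 ≤ |b (m + 1)| := max_le (le_abs_self _) (abs_nonneg _)
  linarith

theorem stmt_12 (n : ℕ) (hn : 3 ≤ n) (a b : ℕ → ℤ)
    (ha0 : a 0 = 0) (han : a (n - 1) = 0)
    (hb0 : b 0 = - (Finset.Icc 1 (n - 2)).sup' (Finset.nonempty_Icc.mpr (by omega))
            (fun k => |a k| + max (b k) 0 + ∑ j ∈ Finset.Icc 1 (k - 1), b j))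
    (hbn : b (n - 1) = - b 0 - ∑ j ∈ Finset.Icc 1 (n - 2), b j) :
    ∑ i ∈ Finset.range n, (|a i| + |b i|) ≤
      4 * ∑ i ∈ Finset.Icc 1 (n - 2), (|a i| + |b i|) := by
  set M := ∑ i ∈ Icc 1 (n - 2), (|a i| + |b i|)
  have hsumM : |∑ j ∈ Icc 1 (n - 2), b j| ≤ M := abs_sum_le_sum_abs_add_abs _ a b
  have hb0M : |b 0| ≤ M := by
    rw [hb0, abs_neg]
    refine abs_sup'_le _ (i := 1) (by simp; omega) (by simp; positivity) fun k hk => ?_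
    obtain ⟨hk1, hkn⟩ := mem_Icc.1 hk
    exact (abs_add_max_zero_add_sum_Icc_le a b hk1).trans <|
      sum_le_sum_of_subset_of_nonneg (Icc_subset_Icc le_rfl hkn) fun _ _ _ => by positivity
  have hbnM : |b (n - 1)| ≤ 2 * M := by
    rw [hbn]
    linarith [abs_sub (-b 0) (∑ j ∈ Icc 1 (n - 2), b j), abs_neg (b 0)]
  rw [sum_range_eq_add_sum_Icc_add _ (by omega), ha0, han, abs_zero, zero_add, zero_add]
  linarith
end

section
/- Let a_{i-1}, a_i, b_{i-1}, b_i be integers with b_{i-1} < 0 < b_i and 0 < a_{i-1} - a_i < b_i - b_{i-1}. Then the σ_i⁻¹ update rules (equation (7)) give b'_{i-1} = b_{i-1} + (a_{i-1} - a_i) and b'_i = b_i - (a_{i-1} - a_i), and moreover |b'_{i-1}| + |b'_i| < |b_{i-1}| + |b_i|. -/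
/-!
Since `b₁ < 0 < b₂`, the positive parts give `b₁⁺ + b₂⁺ = b₂`, and the bound on `d = a₁ - a₂`
makes `b₂ - a₁` the larger term in both maxima, so the update shifts `d` from `b₂` to `b₁`.
For the decrease, `|u| + |v|` is the larger of `|u + v|` and `|u - v|`; here `u + v = b₁ + b₂`
and `u - v = b₁ - b₂ + 2d`, both strictly inside `(b₁ - b₂, b₂ - b₁)`.
-/

section
variable {α : Type*} [CommRing α] [LinearOrder α] [IsStrictOrderedRing α]

theorem abs_add_abs_lt_iff {u v c : α} : |u| + |v| < c ↔ |u + v| < c ∧ |u - v| < c := by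
  refine ⟨fun h ↦ ⟨(abs_add_le u v).trans_lt h, (abs_sub u v).trans_lt h⟩, ?_⟩
  rintro ⟨hadd, hsub⟩
  rw [abs_lt] at hadd hsub
  rcases abs_cases u with ⟨hu, _⟩ | ⟨hu, _⟩ <;> rcases abs_cases v with ⟨hv, _⟩ | ⟨hv, _⟩ <;>
    linarith [hadd.1, hadd.2, hsub.1, hsub.2]

theorem abs_add_add_abs_sub_lt_abs_add_abs {x y d : α} (hx : x < 0) (hy : 0 < y) (hd : 0 < d)
    (hdxy : d < y - x) : |x + d| + |y - d| < |x| + |y| := by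
  rw [abs_of_neg hx, abs_of_pos hy, abs_add_abs_lt_iff, abs_lt, abs_lt]
  refine ⟨⟨?_, ?_⟩, ?_, ?_⟩ <;> linarith

end

theorem stmt_16 (a₁ a₂ b₁ b₂ : ℤ) (hb₁ : b₁ < 0) (hb₂ : 0 < b₂)
    (ha : 0 < a₁ - a₂) (hab : a₁ - a₂ < b₂ - b₁) :
    -a₂ + b₁ + b₂ - max (-a₁ + max b₁ 0 + max b₂ 0) (-a₂ + b₁) = b₁ + (a₁ - a₂) ∧
    a₂ + max (max b₁ 0 + max b₂ 0 - a₁) (b₁ - a₂) = b₂ - (a₁ - a₂) ∧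
    |b₁ + (a₁ - a₂)| + |b₂ - (a₁ - a₂)| < |b₁| + |b₂| := by
  have hpos : max b₁ 0 + max b₂ 0 = b₂ := by
    rw [max_eq_right hb₁.le, max_eq_left hb₂.le, zero_add]
  rw [add_assoc (-a₁), hpos]
  refine ⟨?_, ?_, abs_add_add_abs_sub_lt_abs_add_abs hb₁ hb₂ ha hab⟩
  · rw [max_eq_left (by linarith)]; ring
  · rw [max_eq_left (by linarith)]; ring
end

section
/- Let a_{i-1}, a_i, b_{i-1}, b_i be integers with b_{i-1} < 0 < b_i and 0 < a_i - a_{i-1} < b_i - b_{i-1}. Then the σ_i update rules (equation (4)) give b'_{i-1} = b_{i-1} + (a_i - a_{i-1}) and b'_i = b_i - (a_i - a_{i-1}), a'_{i-1} = max(a_{i-1}, a_i + b_{i-1}), a'_i = min(a_i, a_{i-1} + b_i), and |b'_{i-1}| + |b'_i| < |b_{i-1}| + |b_i|. -/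
/-! In case IIb the signs of `b₁` and `b₂` resolve all positive parts, and
`a₂ - a₁ < b₂ - b₁` says exactly that `a₁ + b₂` beats `a₂ + b₁` in the maximum defining `b'`.
Thus `σ_i` moves `b₁` and `b₂` towards each other by `a₂ - a₁`, which is less than their
distance, so the sum of their absolute values drops. -/

theorem abs_add_add_abs_sub_lt {α : Type*} [AddCommGroup α] [LinearOrder α]
    [IsOrderedAddMonoid α] {x y d : α} (hx : x < 0) (hy : 0 < y) (hd : 0 < d)
    (hdxy : d < y - x) : |x + d| + |y - d| < |x| + |y| := by
  rw [abs_of_neg hx, abs_of_pos hy]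
  rcases abs_cases (x + d) with ⟨h₁, _⟩ | ⟨h₁, _⟩ <;>
    rcases abs_cases (y - d) with ⟨h₂, _⟩ | ⟨h₂, _⟩ <;> rw [h₁, h₂] <;> grind

theorem stmt_17 (a₁ a₂ b₁ b₂ : ℤ) (hb₁ : b₁ < 0) (hb₂ : 0 < b₂)
    (ha : 0 < a₂ - a₁) (hab : a₂ - a₁ < b₂ - b₁) :
    a₂ + b₁ + b₂ - max (a₁ + max b₁ 0 + max b₂ 0) (a₂ + b₁) = b₁ + (a₂ - a₁) ∧
    max (a₁ + max b₁ 0 + max b₂ 0) (a₂ + b₁) - a₂ = b₂ - (a₂ - a₁) ∧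
    max (a₁ + max b₁ 0) (a₂ + b₁) = max a₁ (a₂ + b₁) ∧
    b₂ - max (-a₁) (max b₂ 0 - a₂) = min a₂ (a₁ + b₂) ∧
    |b₁ + (a₂ - a₁)| + |b₂ - (a₂ - a₁)| < |b₁| + |b₂| := by
  have hb₁_pos : max b₁ 0 = 0 := max_eq_right hb₁.le
  have hb₂_pos : max b₂ 0 = b₂ := max_eq_left hb₂.le
  have hmax : max (a₁ + max b₁ 0 + max b₂ 0) (a₂ + b₁) = a₁ + b₂ := by
    rw [hb₁_pos, hb₂_pos, add_zero]
    exact max_eq_left (by omega)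
  refine ⟨by rw [hmax]; ring, by rw [hmax]; ring, by rw [hb₁_pos, add_zero],
    by rw [hb₂_pos]; omega, abs_add_add_abs_sub_lt hb₁ hb₂ ha hab⟩
end
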